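/- arXiv:2512.10025 — 7 statements merged into one kernel-verified Lean document; each statement's English description precedes it below -/
import Mathlib

section
/- Let A_{p,k}(c) be the 2^p × 2^p upper-triangular matrices defined inductively by A_{0,k}(c) = 1 and A_{p+1,k}(c) = [[A_{p,k}(c), c·log(k/(k−1))·I_{2^p}], [0, A_{p,k}(c)]]. Then for any 1 ≤ p, integers s ≥ 1, 2 ≤ k_1 < k_2 < ⋯ < k_s, and constant 0 ≤ c ≤ 1, the operator norm satisfies ‖∏_{i=1}^s A_{p,k_i}(c)‖ ≤ 2^{p−1}·(1 + log^p(k_s/(k_1−1))). -/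
/-- The `2^p × 2^p` upper-triangular matrices `A_{p,k}(c)` defined inductively by
`A_{0,k}(c) = 1` and
`A_{p+1,k}(c) = [[A_{p,k}(c), c·log(k/(k−1))·I], [0, A_{p,k}(c)]]`. -/
noncomputable def KreissA : (p : ℕ) → ℕ → ℝ → Matrix (Fin (2 ^ p)) (Fin (2 ^ p)) ℝ
  | 0, _, _ => 1
  | p + 1, k, c =>
      Matrix.reindex (finSumFinEquiv.trans (finCongr (by ring)))
        (finSumFinEquiv.trans (finCongr (by ring)))
        (Matrix.fromBlocks (KreissA p k c) ((c * Real.log ((k : ℝ) / ((k : ℝ) - 1))) • 1)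
          0 (KreissA p k c))

/-!
Write `A_{p,k}(c) = 1 + a_k • N_p` with `a_k = c·log(k/(k-1)) ≥ 0` and `N_p` the nilpotent matrix
`N_{p+1} = [[N_p, I], [0, N_p]]`, independent of `k`. The entries of `N_p ^ m` are nonnegative and
its row and column sums are at most `m! · C(p, m)`. The product is `q(N_p)` for the polynomial
`q = ∏ (1 + a_{k_i} X)`, whose coefficients satisfy `0 ≤ q_m · m! ≤ S ^ m` with `S = ∑ a_{k_i}`,
so the Schur test bounds its norm by `∑ q_m · m! · C(p, m) ≤ (1 + S) ^ p`.
Since `k_{i+1} - 1 ≥ k_i`, the sum `∑ log (k_i / (k_i - 1))` telescopes to at most `log (k_s / (k_1 - 1))`, and finally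
`(1 + L) ^ p ≤ 2 ^ (p - 1) (1 + L ^ p)`.
-/

open Matrix Finset Polynomial Real

namespace Matrix

structure IsSchurBounded {m n : Type*} [Fintype m] [Fintype n] (M : Matrix m n ℝ) (R : ℝ) :
    Prop where
  nonneg : ∀ i j, 0 ≤ M i j
  bound_nonneg : 0 ≤ R
  row_sum_le : ∀ i, ∑ j, M i j ≤ R
  col_sum_le : ∀ j, ∑ i, M i j ≤ R

namespace IsSchurBounded

variable {m n m' n' : Type*} [Fintype m] [Fintype n] [Fintype m'] [Fintype n']
  {M M' : Matrix m n ℝ} {R R' : ℝ}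

theorem zero : IsSchurBounded (0 : Matrix m n ℝ) 0 :=
  ⟨fun _ _ => le_rfl, le_rfl, fun _ => by simp, fun _ => by simp⟩

theorem one [DecidableEq n] : IsSchurBounded (1 : Matrix n n ℝ) 1 :=
  ⟨fun i j => by by_cases h : i = j <;> simp [one_apply, h], zero_le_one,
    fun i => by simp [one_apply], fun j => by simp [one_apply]⟩

theorem mono (h : IsSchurBounded M R) (hR : R ≤ R') : IsSchurBounded M R' :=
  ⟨h.nonneg, h.bound_nonneg.trans hR, fun i => (h.row_sum_le i).trans hR,
    fun j => (h.col_sum_le j).trans hR⟩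

theorem add (h : IsSchurBounded M R) (h' : IsSchurBounded M' R') :
    IsSchurBounded (M + M') (R + R') :=
  ⟨fun i j => add_nonneg (h.nonneg i j) (h'.nonneg i j), add_nonneg h.bound_nonneg h'.bound_nonneg,
    fun i => by simpa [sum_add_distrib] using add_le_add (h.row_sum_le i) (h'.row_sum_le i),
    fun j => by simpa [sum_add_distrib] using add_le_add (h.col_sum_le j) (h'.col_sum_le j)⟩

theorem smul (h : IsSchurBounded M R) {c : ℝ} (hc : 0 ≤ c) : IsSchurBounded (c • M) (c * R) :=
  ⟨fun i j => mul_nonneg hc (h.nonneg i j), mul_nonneg hc h.bound_nonneg,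
    fun i => by simpa [← mul_sum] using mul_le_mul_of_nonneg_left (h.row_sum_le i) hc,
    fun j => by simpa [← mul_sum] using mul_le_mul_of_nonneg_left (h.col_sum_le j) hc⟩

theorem sum {ι : Type*} {s : Finset ι} {M : ι → Matrix m n ℝ} {R : ι → ℝ}
    (h : ∀ i ∈ s, IsSchurBounded (M i) (R i)) : IsSchurBounded (∑ i ∈ s, M i) (∑ i ∈ s, R i) := by
  classical
  induction s using Finset.induction_on with
  | empty => simpa using zero
  | insert i s hi ih =>
    rw [sum_insert hi, sum_insert hi]
    exact (h i (mem_insert_self i s)).add (ih fun j hj => h j (mem_insert_of_mem hj))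

theorem reindex (h : IsSchurBounded M R) (e : m ≃ m') (e' : n ≃ n') :
    IsSchurBounded (reindex e e' M) R :=
  ⟨fun i j => h.nonneg _ _, h.bound_nonneg,
    fun i => by simpa [← e'.symm.sum_comp] using h.row_sum_le (e.symm i),
    fun j => by simpa [← e.symm.sum_comp] using h.col_sum_le (e'.symm j)⟩

theorem fromBlocks_zero₂₁ {A : Matrix m n ℝ} {B : Matrix m n' ℝ} {D : Matrix m' n' ℝ}
    {R₁ R₂ : ℝ} (hA : IsSchurBounded A R₁) (hB : IsSchurBounded B R₂)
    (hD : IsSchurBounded D R₁) : IsSchurBounded (fromBlocks A B 0 D) (R₁ + R₂) := by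
  refine ⟨?_, add_nonneg hA.bound_nonneg hB.bound_nonneg, ?_, ?_⟩
  · rintro (i | i) (j | j)
    exacts [hA.nonneg i j, hB.nonneg i j, le_rfl, hD.nonneg i j]
  · rintro (i | i) <;> simp only [Fintype.sum_sum_type, fromBlocks_apply₁₁, fromBlocks_apply₁₂,
      fromBlocks_apply₂₁, fromBlocks_apply₂₂, zero_apply, sum_const_zero, zero_add]
    · exact add_le_add (hA.row_sum_le i) (hB.row_sum_le i)
    · exact le_add_of_le_of_nonneg (hD.row_sum_le i) hB.bound_nonneg
  · rintro (j | j) <;> simp only [Fintype.sum_sum_type, fromBlocks_apply₁₁, fromBlocks_apply₁₂,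
      fromBlocks_apply₂₁, fromBlocks_apply₂₂, zero_apply, sum_const_zero, add_zero]
    · exact le_add_of_le_of_nonneg (hA.col_sum_le j) hB.bound_nonneg
    · rw [add_comm R₁]; exact add_le_add (hB.col_sum_le j) (hD.col_sum_le j)

/-- **Schur test**. -/
theorem norm_toEuclideanCLM_le [DecidableEq n] {M : Matrix n n ℝ} (h : IsSchurBounded M R) :
    ‖toEuclideanCLM (𝕜 := ℝ) M‖ ≤ R := by
  refine ContinuousLinearMap.opNorm_le_bound _ h.bound_nonneg fun v => ?_
  rw [EuclideanSpace.norm_eq, EuclideanSpace.norm_eq, ← Real.sqrt_sq h.bound_nonneg,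
    ← Real.sqrt_mul (sq_nonneg R)]
  refine Real.sqrt_le_sqrt ?_
  simp only [ofLp_toEuclideanCLM, mulVec, dotProduct, Real.norm_eq_abs, sq_abs]
  have hrow : ∀ i, (∑ j, M i j * v j) ^ 2 ≤ R * ∑ j, M i j * v j ^ 2 := fun i =>
    (sum_sq_le_sum_mul_sum_of_sq_le_mul _ (fun j _ => h.nonneg i j)
      (fun j _ => mul_nonneg (h.nonneg i j) (sq_nonneg _)) (fun j _ => le_of_eq (by ring))).trans
      (mul_le_mul_of_nonneg_right (h.row_sum_le i)
        (sum_nonneg fun j _ => mul_nonneg (h.nonneg i j) (sq_nonneg _)))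
  calc ∑ i, (∑ j, M i j * v j) ^ 2 ≤ ∑ i, R * ∑ j, M i j * v j ^ 2 := sum_le_sum fun i _ => hrow i
    _ = R * ∑ j, (∑ i, M i j) * v j ^ 2 := by rw [← mul_sum, sum_comm]; simp [sum_mul]
    _ ≤ R * ∑ j, R * v j ^ 2 := by
      gcongr
      · exact h.bound_nonneg
      · exact h.col_sum_le _
    _ = R ^ 2 * ∑ j, v j ^ 2 := by rw [← mul_sum]; ring

end IsSchurBounded

end Matrix

theorem Matrix.fromBlocks_one_pow_succ {n R : Type*} [Fintype n] [DecidableEq n] [Semiring R]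
    (X : Matrix n n R) (m : ℕ) :
    fromBlocks X 1 0 X ^ (m + 1) =
      fromBlocks (X ^ (m + 1)) ((m + 1 : R) • X ^ m) 0 (X ^ (m + 1)) := by
  induction m with
  | zero => simp
  | succ m ih =>
    rw [pow_succ, ih, fromBlocks_multiply]
    simp only [Matrix.mul_zero, Matrix.zero_mul, Matrix.mul_one, add_zero, zero_add, smul_mul,
      ← pow_succ]
    congr 1
    push_cast
    simp only [add_smul, one_smul]
    abel

def kreissEquiv (p : ℕ) : Fin (2 ^ p) ⊕ Fin (2 ^ p) ≃ Fin (2 ^ (p + 1)) :=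
  finSumFinEquiv.trans (finCongr (by ring))

noncomputable def KreissN : (p : ℕ) → Matrix (Fin (2 ^ p)) (Fin (2 ^ p)) ℝ
  | 0 => 0
  | p + 1 => reindex (kreissEquiv p) (kreissEquiv p) (fromBlocks (KreissN p) 1 0 (KreissN p))

theorem KreissA_eq_one_add_smul_KreissN (p k : ℕ) (c : ℝ) :
    KreissA p k c = 1 + (c * Real.log (k / (k - 1))) • KreissN p := by
  induction p with
  | zero => simp [KreissA, KreissN]
  | succ p ih =>
    change reindexAlgEquiv ℝ ℝ (kreissEquiv p) (fromBlocks (KreissA p k c) _ 0 (KreissA p k c)) =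
      1 + _ • reindexAlgEquiv ℝ ℝ (kreissEquiv p) (fromBlocks (KreissN p) 1 0 (KreissN p))
    rw [ih, ← map_smul, ← map_one (reindexAlgEquiv ℝ ℝ (kreissEquiv p)), ← map_add,
      ← fromBlocks_one, fromBlocks_smul, fromBlocks_add]
    simp

theorem KreissN_succ_pow_succ (p m : ℕ) :
    KreissN (p + 1) ^ (m + 1) = reindex (kreissEquiv p) (kreissEquiv p)
      (fromBlocks (KreissN p ^ (m + 1)) ((m + 1 : ℝ) • KreissN p ^ m) 0 (KreissN p ^ (m + 1))) := by
  rw [← coe_reindexAlgEquiv ℝ ℝ, ← fromBlocks_one_pow_succ, map_pow]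
  rfl

theorem isSchurBounded_KreissN_pow (p m : ℕ) :
    IsSchurBounded (KreissN p ^ m) (m.factorial * p.choose m) := by
  induction p generalizing m with
  | zero =>
    cases m with
    | zero => simpa using IsSchurBounded.one
    | succ m => simpa [KreissN] using IsSchurBounded.zero
  | succ p ih =>
    cases m with
    | zero => simpa using IsSchurBounded.one
    | succ m =>
      rw [KreissN_succ_pow_succ]
      refine (((ih (m + 1)).fromBlocks_zero₂₁ ((ih m).smul (by positivity)) (ih (m + 1))).reindex
        _ _).mono (le_of_eq ?_)
      rw [Nat.choose_succ_succ', Nat.factorial_succ]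
      push_cast
      ring

section Polynomial

variable {R : Type*} {ι : Type*} (l : List ι) (a : ι → R)

theorem aeval_prod_one_add_C_mul_X [CommSemiring R] {A : Type*} [Semiring A] [Algebra R A]
    (M : A) :
    aeval M (l.map fun i => 1 + C (a i) * X).prod = (l.map fun i => 1 + a i • M).prod := by
  simp [map_list_prod, Function.comp_def, Algebra.smul_def]

theorem coeff_one_add_C_mul_X_mul_succ [Semiring R] (b : R) (Q : R[X]) (m : ℕ) :
    ((1 + C b * X) * Q).coeff (m + 1) = Q.coeff (m + 1) + b * Q.coeff m := by
  simp [add_mul, mul_assoc, coeff_C_mul, coeff_X_mul]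

theorem coeff_prod_one_add_C_mul_X_nonneg [CommSemiring R] [PartialOrder R] [IsOrderedRing R]
    (ha : ∀ i ∈ l, 0 ≤ a i) (m : ℕ) :
    0 ≤ (l.map fun i => 1 + C (a i) * X).prod.coeff m := by
  induction l generalizing m with
  | nil => by_cases h : m = 0 <;> simp [coeff_one, h]
  | cons i t ih =>
    have iht := ih fun j hj => ha j (List.mem_cons_of_mem i hj)
    cases m with
    | zero => simpa [mul_coeff_zero] using iht 0
    | succ m =>
      rw [List.map_cons, List.prod_cons, coeff_one_add_C_mul_X_mul_succ]
      exact add_nonneg (iht _) (mul_nonneg (ha i List.mem_cons_self) (iht m))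

theorem coeff_prod_one_add_C_mul_X_mul_factorial_le [CommSemiring R] [LinearOrder R]
    [IsOrderedRing R] [ExistsAddOfLE R] (ha : ∀ i ∈ l, 0 ≤ a i) (m : ℕ) :
    (l.map fun i => 1 + C (a i) * X).prod.coeff m * m.factorial ≤ (l.map a).sum ^ m := by
  induction l generalizing m with
  | nil => cases m <;> simp [coeff_one]
  | cons i t ih =>
    have ht : ∀ j ∈ t, 0 ≤ a j := fun j hj => ha j (List.mem_cons_of_mem i hj)
    have hai : 0 ≤ a i := ha i List.mem_cons_self
    have hT : 0 ≤ (t.map a).sum := List.sum_nonneg (by simpa using ht)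
    cases m with
    | zero => simpa [mul_coeff_zero] using ih ht 0
    | succ m =>
      set Q := (t.map fun i => 1 + C (a i) * X).prod
      rw [List.map_cons, List.prod_cons, coeff_one_add_C_mul_X_mul_succ, List.map_cons,
        List.sum_cons, add_comm (a i)]
      calc (Q.coeff (m + 1) + a i * Q.coeff m) * (m + 1).factorial
          = Q.coeff (m + 1) * (m + 1).factorial +
              (m + 1 : ℕ) * a i * (Q.coeff m * m.factorial) := by
            rw [Nat.factorial_succ]; push_cast; ring
        _ ≤ (t.map a).sum ^ (m + 1) + (m + 1 : ℕ) * (t.map a).sum ^ m * a i := by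
            rw [mul_right_comm _ (a i)]
            gcongr
            exacts [ih ht _, ih ht _]
        _ ≤ ((t.map a).sum + a i) ^ (m + 1) :=
            pow_add_mul_le_add_pow hT (add_nonneg (mul_nonneg zero_le_two hT) hai) (m + 1)

end Polynomial

theorem isSchurBounded_aeval_KreissN (p : ℕ) {Q : ℝ[X]} {S : ℝ} (hQ₀ : ∀ m, 0 ≤ Q.coeff m)
    (hQ : ∀ m, Q.coeff m * m.factorial ≤ S ^ m) :
    IsSchurBounded (aeval (KreissN p) Q) ((1 + S) ^ p) := by
  rw [aeval_eq_sum_range' (n := Q.natDegree + p + 1) (by omega)]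
  refine (IsSchurBounded.sum fun m _ =>
    (isSchurBounded_KreissN_pow p m).smul (hQ₀ m)).mono ?_
  calc ∑ m ∈ range (Q.natDegree + p + 1), Q.coeff m * (m.factorial * p.choose m)
      ≤ ∑ m ∈ range (Q.natDegree + p + 1), S ^ m * p.choose m := by
        refine sum_le_sum fun m _ => ?_
        rw [← mul_assoc]
        exact mul_le_mul_of_nonneg_right (hQ m) (Nat.cast_nonneg _)
    _ = ∑ m ∈ range (p + 1), S ^ m * p.choose m := by
        refine (sum_subset (range_subset_range.2 (by omega)) fun m _ hm => ?_).symm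
        rw [Nat.choose_eq_zero_of_lt (by simpa using hm), Nat.cast_zero, mul_zero]
    _ = (1 + S) ^ p := by simp [add_comm 1 S, add_pow]

theorem log_div_add_log_div_sub_one_le {x y b : ℝ} (hb : 0 < b) (hx : 0 < x) (hxy : x ≤ y - 1) :
    log (x / b) + log (y / (y - 1)) ≤ log (y / b) := by
  have hy₁ : 0 < y - 1 := hx.trans_le hxy
  have hy : 0 < y := by linarith
  rw [← log_mul (div_pos hx hb).ne' (div_pos hy hy₁).ne']
  refine log_le_log (mul_pos (div_pos hx hb) (div_pos hy hy₁)) ?_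
  rw [div_mul_div_comm, mul_comm x y, mul_div_mul_comm]
  exact mul_le_of_le_one_right (div_pos hy hb).le ((div_le_one hy₁).2 hxy)

theorem sum_log_div_sub_one_le (k : ℕ → ℕ) {s : ℕ} (hs : 1 ≤ s)
    (hk : StrictMonoOn k (Set.Icc 1 s)) (h2 : 2 ≤ k 1) :
    ((List.range s).map fun i => log (k (i + 1) / (k (i + 1) - 1))).sum ≤
      log (k s / (k 1 - 1)) := by
  induction s, hs using Nat.le_induction with
  | base => simp
  | succ s hs ih =>
    have hlt : k s < k (s + 1) := hk ⟨hs, by omega⟩ ⟨by omega, le_rfl⟩ (by omega)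
    have hks : 2 ≤ k s := h2.trans (hk.monotoneOn ⟨le_rfl, by omega⟩ ⟨hs, by omega⟩ hs)
    rw [List.sum_range_succ]
    refine (add_le_add (ih (hk.mono (Set.Icc_subset_Icc_right (by omega)))) le_rfl).trans
      (log_div_add_log_div_sub_one_le ?_ ?_ ?_)
    · have : (2 : ℝ) ≤ k 1 := by exact_mod_cast h2
      linarith
    · have : (2 : ℝ) ≤ k s := by exact_mod_cast hks
      linarith
    · have : (k s : ℝ) + 1 ≤ k (s + 1) := by exact_mod_cast hlt
      linarith

theorem norm_prod_KreissA_le_general (p : ℕ) (s : ℕ) (hs : 1 ≤ s) (k : ℕ → ℕ)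
    (hmono : StrictMonoOn k (Set.Icc 1 s)) (h2 : 2 ≤ k 1)
    (c : ℝ) (hc0 : 0 ≤ c) (hc1 : c ≤ 1) :
    ‖Matrix.toEuclideanCLM (𝕜 := ℝ)
        (((List.range s).map fun i => KreissA p (k (i + 1)) c).prod)‖ ≤
      2 ^ (p - 1) * (1 + (Real.log ((k s : ℝ) / ((k 1 : ℝ) - 1))) ^ p) := by
  set ℓ : ℕ → ℝ := fun i => log (k (i + 1) / (k (i + 1) - 1))
  have hℓ : ∀ i ∈ List.range s, 0 ≤ ℓ i := fun i hi => by
    have hk : 2 ≤ k (i + 1) :=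
      h2.trans (hmono.monotoneOn ⟨le_rfl, hs⟩ ⟨by omega, by simpa using hi⟩ (by omega))
    have hk' : (2 : ℝ) ≤ k (i + 1) := by exact_mod_cast hk
    exact log_nonneg ((one_le_div (by linarith)).2 (by linarith))
  have ha : ∀ i ∈ List.range s, 0 ≤ c * ℓ i := fun i hi => mul_nonneg hc0 (hℓ i hi)
  set S := ((List.range s).map fun i => c * ℓ i).sum with hS
  have hS₀ : 0 ≤ S := List.sum_nonneg (by simpa using ha)
  have hSL : S ≤ log (k s / (k 1 - 1)) := by
    rw [hS, List.sum_map_mul_left]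
    exact (mul_le_of_le_one_left (List.sum_nonneg (by simpa using hℓ)) hc1).trans
      (sum_log_div_sub_one_le k hs hmono h2)
  simp_rw [KreissA_eq_one_add_smul_KreissN, ← aeval_prod_one_add_C_mul_X]
  calc _ ≤ (1 + S) ^ p :=
        (isSchurBounded_aeval_KreissN p (coeff_prod_one_add_C_mul_X_nonneg _ _ ha)
          (coeff_prod_one_add_C_mul_X_mul_factorial_le _ _ ha)).norm_toEuclideanCLM_le
    _ ≤ (1 + log (k s / (k 1 - 1))) ^ p := by gcongr
    _ ≤ 2 ^ (p - 1) * (1 ^ p + log (k s / (k 1 - 1)) ^ p) :=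
        add_pow_le zero_le_one (hS₀.trans hSL) p
    _ = _ := by rw [one_pow]

theorem norm_prod_KreissA_le (p : ℕ) (hp : 1 ≤ p) (s : ℕ) (hs : 1 ≤ s) (k : ℕ → ℕ)
    (hmono : StrictMonoOn k (Set.Icc 1 s)) (h2 : 2 ≤ k 1)
    (c : ℝ) (hc0 : 0 ≤ c) (hc1 : c ≤ 1) :
    ‖Matrix.toEuclideanCLM (𝕜 := ℝ)
        (((List.range s).map fun i => KreissA p (k (i + 1)) c).prod)‖ ≤
      2 ^ (p - 1) * (1 + (Real.log ((k s : ℝ) / ((k 1 : ℝ) - 1))) ^ p) :=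
  norm_prod_KreissA_le_general p s hs k hmono h2 c hc0 hc1
end

section
/- Let m ≥ 1 and let A_{m,k}(c) be defined by A_{0,k}(c) = 1 and A_{p+1,k}(c) = [[A_{p,k}(c), c·log(k/(k−1))·I_{2^p}], [0, A_{p,k}(c)]] for c > 0 and k ≥ 2. Then for N > m, the (1, 2^m) entry of the product ∏_{k=2}^{N} A_{m,k}(c) is at least c^m · log^m(N/m). -/
/-! Write `x_k = c log (k / (k - 1))`. Multiplying out the block matrices, the corner entry of
`∏ A_{m,k}` is the sum, over ordered `m`-tuples of distinct positions, of the products of the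
weights `x` there (`distinctTupleSum`). Choosing the first position and recursing, this sum is at
least `∏_{j < m} (x_{j+2} + ⋯ + x_N)`: since the `x_k` decrease, deleting one weight from a tail
sum lowers it by at most the tail's first term. The tails telescope to
`c log (N / (j + 1)) ≥ c log (N / m)`. -/

open Matrix Real

variable {ι R : Type*}

def distinctTupleSum [CommSemiring R] (x : ι → R) : ℕ → List ι → R
  | 0, _ => 1
  | m + 1, l => ∑ p : Fin l.length, x l[p] * distinctTupleSum x m (l.eraseIdx p)

theorem list_prod_fromBlocks_smul_one {n : Type*} [Fintype n] [DecidableEq n] [CommSemiring R]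
    (A : ι → Matrix n n R) (x : ι → R) (l : List ι) :
    (l.map fun i => fromBlocks (A i) (x i • 1) 0 (A i)).prod =
      fromBlocks (l.map A).prod (∑ p : Fin l.length, x l[p] • ((l.eraseIdx p).map A).prod)
        0 (l.map A).prod := by
  induction l with
  | nil => simp
  | cons i l ih =>
    simp [ih, fromBlocks_multiply, Fin.sum_univ_succ, Finset.mul_sum, add_comm]

theorem List.sum_map_drop_succ_le_drop_eraseIdx [AddCommMonoid R] [PartialOrder R]
    [IsOrderedAddMonoid R] {x : ι → R} {l : List ι} (hl : l.Pairwise fun i i' => x i' ≤ x i)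
    {p : ℕ} (hp : p < l.length) (j : ℕ) :
    ((l.drop (j + 1)).map x).sum ≤ (((l.eraseIdx p).drop j).map x).sum := by
  induction l generalizing p j with
  | nil => simp at hp
  | cons i l ih =>
    rcases p with _ | p
    · simp
    rcases j with _ | j
    · have hp' : p < l.length := by simpa using hp
      have hsum : (l.map x).sum = x l[p] + ((l.eraseIdx p).map x).sum := by
        rw [← List.sum_cons, ← List.map_cons,
          ((List.getElem_cons_eraseIdx_perm hp').map x).sum_eq]
      simpa [hsum] using add_le_add_left (List.rel_of_pairwise_cons hl (List.getElem_mem hp')) _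
    · simpa using ih hl.of_cons (by simpa using hp) j

theorem prod_sum_drop_le_distinctTupleSum [CommSemiring R] [PartialOrder R] [IsOrderedRing R]
    {x : ι → R} {l : List ι} (hx : ∀ i ∈ l, 0 ≤ x i)
    (hl : l.Pairwise fun i i' => x i' ≤ x i) (m : ℕ) :
    ∏ j ∈ Finset.range m, ((l.drop j).map x).sum ≤ distinctTupleSum x m l := by
  induction m generalizing l with
  | zero => simp [distinctTupleSum]
  | succ m ih =>
    have hdrop : ∀ j, 0 ≤ ((l.drop j).map x).sum := fun j =>
      List.sum_nonneg fun _ h => by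
        obtain ⟨i, hi, rfl⟩ := List.mem_map.mp h
        exact hx i (List.mem_of_mem_drop hi)
    calc ∏ j ∈ Finset.range (m + 1), ((l.drop j).map x).sum
        = ∑ p : Fin l.length,
            x l[p] * ∏ j ∈ Finset.range m, ((l.drop (j + 1)).map x).sum := by
          rw [Finset.prod_range_succ', ← Finset.sum_mul, mul_comm]
          simp
      _ ≤ ∑ p : Fin l.length, x l[p] * distinctTupleSum x m (l.eraseIdx p) := by
          gcongr with p
          · exact hx _ (List.getElem_mem _)
          refine le_trans ?_ (ih (fun i hi => hx i ((l.eraseIdx_sublist p).mem hi))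
            (hl.sublist (l.eraseIdx_sublist p)))
          exact Finset.prod_le_prod (fun j _ => hdrop (j + 1))
            fun j _ => List.sum_map_drop_succ_le_drop_eraseIdx hl p.2 j

theorem list_prod_KreissA_corner_eq_distinctTupleSum (c : ℝ) (m : ℕ) (ks : List ℕ) :
    (ks.map fun k => KreissA m k c).prod ⟨0, Nat.two_pow_pos m⟩
        ⟨2 ^ m - 1, Nat.sub_lt (Nat.two_pow_pos m) one_pos⟩ =
      distinctTupleSum (fun k : ℕ => c * log (k / (k - 1))) m ks := by
  induction m generalizing ks with
  | zero => simp [KreissA, distinctTupleSum]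
  | succ m ih =>
    let e : Fin (2 ^ m) ⊕ Fin (2 ^ m) ≃ Fin (2 ^ (m + 1)) :=
      finSumFinEquiv.trans (finCongr (by ring))
    have hprod : (ks.map fun k => KreissA (m + 1) k c).prod =
        reindexAlgEquiv ℝ ℝ e ((ks.map fun k => fromBlocks (KreissA m k c)
          ((c * log (k / (k - 1))) • 1) 0 (KreissA m k c)).prod) := by
      rw [map_list_prod, List.map_map]
      rfl
    have hfirst : e.symm ⟨0, Nat.two_pow_pos (m + 1)⟩ = Sum.inl ⟨0, Nat.two_pow_pos m⟩ := by
      simp [e, Equiv.symm_apply_eq, Fin.ext_iff]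
    have hlast : e.symm ⟨2 ^ (m + 1) - 1, Nat.sub_lt (Nat.two_pow_pos (m + 1)) one_pos⟩ =
        Sum.inr ⟨2 ^ m - 1, Nat.sub_lt (Nat.two_pow_pos m) one_pos⟩ := by
      simp [e, Equiv.symm_apply_eq, Fin.ext_iff, pow_succ]
      omega
    rw [hprod, list_prod_fromBlocks_smul_one, coe_reindexAlgEquiv, reindex_apply,
      submatrix_apply, hfirst, hlast, fromBlocks_apply₁₂, Matrix.sum_apply]
    simp only [Matrix.smul_apply, smul_eq_mul, ih]
    rfl

theorem Real.log_div_sub_one_nonneg {t : ℝ} (ht : 1 < t) : 0 ≤ log (t / (t - 1)) :=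
  log_nonneg <| (one_le_div (by linarith)).mpr (by linarith)

theorem Real.log_div_sub_one_le_of_le {s t : ℝ} (hs : 1 < s) (hst : s ≤ t) :
    log (t / (t - 1)) ≤ log (s / (s - 1)) := by
  apply log_le_log (div_pos (by linarith) (by linarith))
  rw [div_le_div_iff₀ (by linarith) (by linarith)]
  linarith

theorem sum_map_log_div_sub_one_range' {s : ℕ} (hs : 0 < s) (n : ℕ) :
    ((List.range' (s + 1) n).map fun k : ℕ => log (k / (k - 1 : ℝ))).sum =
      log ((s + n) / s) := by
  have hstep : ∀ i : ℕ, log (((s + 1 + i : ℕ) : ℝ) / ((s + 1 + i : ℕ) - 1)) =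
      log (s + (i + 1 : ℕ)) - log (s + i) := by
    intro i
    rw [← log_div (by positivity) (by positivity)]
    push_cast
    ring_nf
  rw [List.range'_eq_map_range, List.map_map, Function.comp_def]
  simp only [hstep]
  rw [List.sum_range_sub n (fun i : ℕ => log (s + i)), log_div (by positivity) (by positivity)]
  simp

theorem sum_map_log_div_sub_one_drop_range' {N j : ℕ} (hj : j < N) :
    (((List.range' 2 (N - 1)).drop j).map fun k : ℕ => log (k / (k - 1 : ℝ))).sum =
      log (N / (j + 1)) := by
  rw [List.drop_range', show 2 + j * 1 = j + 1 + 1 by ring,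
    sum_map_log_div_sub_one_range' j.succ_pos, Nat.sub_sub, Nat.cast_sub (by omega : 1 + j ≤ N)]
  push_cast
  ring_nf

theorem log_div_le_sum_map_log_div_sub_one_drop_range' {m N j : ℕ} (hN : m < N) (hj : j < m) :
    log (N / m) ≤
      (((List.range' 2 (N - 1)).drop j).map fun k : ℕ => log (k / (k - 1 : ℝ))).sum := by
  have hm : (0 : ℝ) < m := by exact_mod_cast j.zero_le.trans_lt hj
  rw [sum_map_log_div_sub_one_drop_range' (by omega)]
  gcongr
  · exact div_pos (by exact_mod_cast m.zero_le.trans_lt hN) hm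
  · exact_mod_cast hj

theorem pairwise_log_div_sub_one_range' {c : ℝ} (hc : 0 ≤ c) (n : ℕ) :
    (List.range' 2 n).Pairwise fun k k' : ℕ =>
      c * log (k' / (k' - 1 : ℝ)) ≤ c * log (k / (k - 1)) := by
  refine (List.pairwise_lt_range' ..).imp_of_mem fun {k k'} hk _ hlt => ?_
  have hk : (2 : ℝ) ≤ k := by simp at hk; exact_mod_cast hk.1
  exact mul_le_mul_of_nonneg_left
    (log_div_sub_one_le_of_le (by linarith) (by exact_mod_cast hlt.le)) hc

theorem corner_entry_prod_KreissA_ge (m : ℕ) (N : ℕ) (hN : m < N)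
    (c : ℝ) (hc : 0 < c) :
    c ^ m * (Real.log ((N : ℝ) / m)) ^ m ≤
      (((List.range (N - 1)).map fun i => KreissA m (i + 2) c).prod)
        ⟨0, by positivity⟩ ⟨2 ^ m - 1, Nat.sub_lt (by positivity) one_pos⟩ := by
  have hks : (List.range (N - 1)).map (fun i => KreissA m (i + 2) c) =
      (List.range' 2 (N - 1)).map fun k => KreissA m k c := by
    simp [List.range'_eq_map_range, add_comm]
  have hx : ∀ k ∈ List.range' 2 (N - 1), 0 ≤ c * log (k / (k - 1 : ℝ)) := fun k hk =>
    mul_nonneg hc.le (log_div_sub_one_nonneg (by simp at hk; exact_mod_cast hk.1))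
  have hlog : 0 ≤ log (N / m) := by
    rcases m.eq_zero_or_pos with rfl | hm
    · simp -- `N / 0 = 0` and `log 0 = 0`
    · exact log_nonneg ((one_le_div (by positivity)).mpr (by exact_mod_cast hN.le))
  have htail : ∀ j ∈ Finset.range m, c * log (N / m) ≤
      (((List.range' 2 (N - 1)).drop j).map fun k : ℕ => c * log (k / (k - 1 : ℝ))).sum :=
    fun j hj => by
      rw [List.sum_map_mul_left]
      exact mul_le_mul_of_nonneg_left
        (log_div_le_sum_map_log_div_sub_one_drop_range' hN (Finset.mem_range.mp hj)) hc.le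
  rw [hks, list_prod_KreissA_corner_eq_distinctTupleSum]
  calc c ^ m * log (N / m) ^ m = ∏ _j ∈ Finset.range m, c * log (N / m) := by
        rw [Finset.prod_const, Finset.card_range, mul_pow]
    _ ≤ _ := Finset.prod_le_prod (fun _ _ => mul_nonneg hc.le hlog) htail
    _ ≤ _ := prod_sum_drop_le_distinctTupleSum hx (pairwise_log_div_sub_one_range' hc.le _) m
end

section
/- Let H be a Hilbert space and let P : [−π, π] → B(H) be a weakly measurable function with P(θ) positive semi-definite for all θ, and let p : [−π, π] → ℂ be a bounded measurable function with |p(θ)| ≤ 1 for all θ. Then ‖∫_{−π}^{π} P(θ) p(θ) dθ‖ ≤ ‖∫_{−π}^{π} P(θ) dθ‖. -/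
open MeasureTheory Real

/-!
For a positive operator `A`, Cauchy–Schwarz for the semidefinite form `⟪·, A ·⟫` together with
AM–GM gives `‖⟪y, A x⟫‖ ≤ (re ⟪y, A y⟫ + re ⟪x, A x⟫) / 2`. Since `‖p‖ ≤ 1`, integrating this
bound shows `‖⟪y, (∫ p • P) x⟫‖ ≤ (re ⟪y, S y⟫ + re ⟪x, S x⟫) / 2 ≤ ‖S‖` for unit vectors
`x, y`, where `S = ∫ P`.
-/

open scoped InnerProductSpace

namespace ContinuousLinearMap.IsPositive

variable {𝕜 E : Type*} [RCLike 𝕜] [NormedAddCommGroup E] [InnerProductSpace 𝕜 E]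
  {T : E →L[𝕜] E}

open RCLike

theorem norm_inner_sq_le (hT : T.IsPositive) (x y : E) :
    ‖⟪x, T y⟫_𝕜‖ ^ 2 ≤ re ⟪x, T x⟫_𝕜 * re ⟪y, T y⟫_𝕜 := by
  -- `T` defines a positive semidefinite sesquilinear form, to which Cauchy–Schwarz applies
  let c : PreInnerProductSpace.Core 𝕜 E :=
    { inner := fun a b => ⟪a, T b⟫_𝕜
      conj_inner_symm := fun a b => by
        rw [inner_conj_symm, hT.inner_left_eq_inner_right]
      re_inner_nonneg := hT.re_inner_nonneg_right
      add_left := fun a b z => inner_add_left a b (T z)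
      smul_left := fun a b r => inner_smul_left a (T b) r }
  have h : ‖⟪x, T y⟫_𝕜‖ * ‖⟪y, T x⟫_𝕜‖ ≤ re ⟪x, T x⟫_𝕜 * re ⟪y, T y⟫_𝕜 :=
    @InnerProductSpace.Core.inner_mul_inner_self_le 𝕜 E _ _ _ c x y
  rwa [← hT.inner_left_eq_inner_right y x, norm_inner_symm (T y) x, ← sq] at h

theorem norm_inner_le_add_div_two (hT : T.IsPositive) (x y : E) :
    ‖⟪x, T y⟫_𝕜‖ ≤ (re ⟪x, T x⟫_𝕜 + re ⟪y, T y⟫_𝕜) / 2 := by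
  nlinarith [hT.norm_inner_sq_le x y, hT.re_inner_nonneg_right x, hT.re_inner_nonneg_right y,
    sq_nonneg (re ⟪x, T x⟫_𝕜 - re ⟪y, T y⟫_𝕜), norm_nonneg ⟪x, T y⟫_𝕜]

end ContinuousLinearMap.IsPositive

section Integral

variable {α H : Type*} [MeasurableSpace α] {μ : Measure α}
  [NormedAddCommGroup H] [InnerProductSpace ℂ H] [CompleteSpace H]

open RCLike

theorem inner_integral_apply {A : α → H →L[ℂ] H} (hA : Integrable A μ) (x y : H) :
    ⟪x, (∫ a, A a ∂μ) y⟫_ℂ = ∫ a, ⟪x, A a y⟫_ℂ ∂μ := by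
  rw [ContinuousLinearMap.integral_apply hA, integral_inner (hA.apply_continuousLinearMap y)]

theorem re_inner_integral_apply_self {A : α → H →L[ℂ] H} (hA : Integrable A μ) (x : H) :
    re ⟪x, (∫ a, A a ∂μ) x⟫_ℂ = ∫ a, re ⟪x, A a x⟫_ℂ ∂μ := by
  rw [inner_integral_apply hA, integral_re ((hA.apply_continuousLinearMap x).const_inner x)]

theorem norm_integral_smul_le_of_isPositive {A : α → H →L[ℂ] H} (hA : ∀ a, (A a).IsPositive)
    {f : α → ℂ} (hf : ∀ a, ‖f a‖ ≤ 1) (hA_int : Integrable A μ)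
    (hfA_int : Integrable (fun a => f a • A a) μ) :
    ‖∫ a, f a • A a ∂μ‖ ≤ ‖∫ a, A a ∂μ‖ := by
  set S := ∫ a, A a ∂μ
  have hS (x : H) (hx : ‖x‖ = 1) : re ⟪x, S x⟫_ℂ ≤ ‖S‖ :=
    calc re ⟪x, S x⟫_ℂ ≤ ‖x‖ * ‖S x‖ := re_inner_le_norm x (S x)
      _ ≤ ‖S‖ := by simpa [hx] using S.unit_le_opNorm x hx.le
  refine ContinuousLinearMap.opNorm_le_of_re_inner_le (norm_nonneg S) fun x y hx hy => ?_
  have hquad (z : H) : Integrable (fun a => re ⟪z, A a z⟫_ℂ) μ :=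
    ((hA_int.apply_continuousLinearMap z).const_inner z).re
  have hpoint (a : α) : ‖⟪y, (f a • A a) x⟫_ℂ‖ ≤
      (re ⟪y, A a y⟫_ℂ + re ⟪x, A a x⟫_ℂ) / 2 := by
    rw [smul_apply, inner_smul_right, norm_mul]
    exact (mul_le_of_le_one_left (norm_nonneg _) (hf a)).trans
      ((hA a).norm_inner_le_add_div_two y x)
  calc re ⟪(∫ a, f a • A a ∂μ) x, y⟫_ℂ
      ≤ ‖⟪y, (∫ a, f a • A a ∂μ) x⟫_ℂ‖ := (re_le_norm _).trans (norm_inner_symm _ _).le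
    _ = ‖∫ a, ⟪y, (f a • A a) x⟫_ℂ ∂μ‖ := by rw [inner_integral_apply hfA_int]
    _ ≤ ∫ a, (re ⟪y, A a y⟫_ℂ + re ⟪x, A a x⟫_ℂ) / 2 ∂μ :=
      norm_integral_le_of_norm_le (((hquad y).add (hquad x)).div_const 2) (.of_forall hpoint)
    _ = (re ⟪y, S y⟫_ℂ + re ⟪x, S x⟫_ℂ) / 2 := by
      rw [integral_div, integral_add (hquad y) (hquad x), re_inner_integral_apply_self hA_int,
        re_inner_integral_apply_self hA_int]
    _ ≤ ‖S‖ := by linarith [hS y hy, hS x hx]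

end Integral

theorem norm_integral_positive_smul_le_general {H : Type*} [NormedAddCommGroup H]
    [InnerProductSpace ℂ H] [CompleteSpace H]
    (P : ℝ → (H →L[ℂ] H)) (hP : ∀ θ, (P θ).IsPositive)
    (p : ℝ → ℂ) (hp : ∀ θ, ‖p θ‖ ≤ 1)
    (hPint : IntegrableOn P (Set.Icc (-π) π))
    (hpPint : IntegrableOn (fun θ => p θ • P θ) (Set.Icc (-π) π)) :
    ‖∫ θ in Set.Icc (-π) π, p θ • P θ‖ ≤ ‖∫ θ in Set.Icc (-π) π, P θ‖ :=
  norm_integral_smul_le_of_isPositive hP hp hPint hpPint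

theorem norm_integral_positive_smul_le {H : Type*} [NormedAddCommGroup H]
    [InnerProductSpace ℂ H] [CompleteSpace H]
    (P : ℝ → (H →L[ℂ] H)) (hP : ∀ θ, (P θ).IsPositive)
    (p : ℝ → ℂ) (hp_meas : Measurable p) (hp : ∀ θ, ‖p θ‖ ≤ 1)
    (hPint : IntegrableOn P (Set.Icc (-π) π))
    (hpPint : IntegrableOn (fun θ => p θ • P θ) (Set.Icc (-π) π)) :
    ‖∫ θ in Set.Icc (-π) π, p θ • P θ‖ ≤ ‖∫ θ in Set.Icc (-π) π, P θ‖ :=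
  norm_integral_positive_smul_le_general P hP p hp hPint hpPint
end

section
/- Let v, v', C ∈ ℂ and R > 0 satisfy v − C = iRv' and |v'| = 1. Let T be a bounded operator on a Hilbert space with v, C not in the spectrum of T. Then (1/i)(v'(v−T)^{-1} − conj(v')(conj(v)−T*)^{-1}) + (1/R)·I = R·(v−T)^{-1}(T−C)·((1/R²)·I − (T−C)^{-1}(T−C)^{-*})·(T−C)*(v−T)^{-*}. -/
open ContinuousLinearMap


lemma dl_aux {A : Type*} [Ring A] [StarRing A] [Algebra ℂ A] [StarModule ℂ A]
    (a b : A) (ha : IsUnit a) (hb : IsUnit b) (v' : ℂ) (R : ℝ) (hR : 0 < R)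
    (hv' : ‖v'‖ = 1) (hb' : b = (Complex.I * R * v') • 1 - a) :
    (Complex.I)⁻¹ • (v' • Ring.inverse a - (starRingEnd ℂ v') • Ring.inverse (star a)) +
      ((R : ℂ))⁻¹ • (1 : A) =
    (R : ℂ) • (Ring.inverse a * b *
        (((R : ℂ) ^ 2)⁻¹ • (1 : A) - Ring.inverse b * Ring.inverse (star b)) *
        star b * Ring.inverse (star a)) := by
  set c : ℂ := Complex.I * R * v' with hc
  have hvv : v' * (starRingEnd ℂ) v' = 1 := by
    rw [Complex.mul_conj']
    norm_cast
    simp [hv']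
  have hcc : c * (starRingEnd ℂ) c = (R : ℂ) ^ 2 := by
    simp only [hc, map_mul, Complex.conj_I, Complex.conj_ofReal]
    have : Complex.I * ↑R * v' * (-Complex.I * ↑R * (starRingEnd ℂ) v')
        = (Complex.I * -Complex.I) * (↑R * ↑R) * (v' * (starRingEnd ℂ) v') := by ring
    rw [this, hvv]
    simp [Complex.I_mul_I]
    ring
  set ia := Ring.inverse a with hia
  set ia' := Ring.inverse (star a) with hia'
  set ib := Ring.inverse b with hib
  set ib' := Ring.inverse (star b) with hib'
  have h1 : a * ia = 1 := Ring.mul_inverse_cancel a ha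
  have h2 : ia * a = 1 := Ring.inverse_mul_cancel a ha
  have h3 : star a * ia' = 1 := Ring.mul_inverse_cancel _ ha.star
  have h4 : ia' * star a = 1 := Ring.inverse_mul_cancel _ ha.star
  have h5 : b * ib = 1 := Ring.mul_inverse_cancel b hb
  have h6 : ib' * star b = 1 := Ring.inverse_mul_cancel _ hb.star
  have hsb : star b = (starRingEnd ℂ) c • (1 : A) - star a := by
    rw [hb']
    simp [star_smul, Complex.star_def]
  have hmid : b * (((R : ℂ) ^ 2)⁻¹ • (1 : A) - ib * ib') * star b
      = ((R : ℂ) ^ 2)⁻¹ • (b * star b) - 1 := by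
    rw [mul_sub, sub_mul, mul_smul_comm, mul_one, smul_mul_assoc,
      ← mul_assoc b ib ib', h5, one_mul, h6]
  have hbb : b * star b = ((R : ℂ) ^ 2) • (1 : A) - c • star a - (starRingEnd ℂ) c • a
      + a * star a := by
    rw [hsb, hb']
    rw [sub_mul, mul_sub, mul_sub, smul_mul_assoc, smul_mul_assoc, one_mul,
      mul_smul_comm, mul_one, smul_smul, hcc, one_mul]
    abel
  have hcore : ia * (b * star b) * ia'
      = ((R : ℂ) ^ 2) • (ia * ia') - c • ia - (starRingEnd ℂ) c • ia' + 1 := by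
    rw [hbb]
    simp only [mul_add, add_mul, mul_sub, sub_mul, mul_smul_comm, smul_mul_assoc,
      mul_one, one_mul, mul_assoc, h2, h3]
  have hrhs : ia * b * (((R : ℂ) ^ 2)⁻¹ • (1 : A) - ib * ib') * star b * ia'
      = ((R : ℂ) ^ 2)⁻¹ • (ia * (b * star b) * ia') - ia * ia' := by
    rw [mul_assoc ia b _, mul_assoc ia (b * _) (star b), hmid]
    rw [mul_sub, sub_mul, mul_one, mul_smul_comm, smul_mul_assoc]
  rw [hrhs, hcore]
  have hR0 : (R : ℂ) ≠ 0 := by exact_mod_cast (ne_of_gt hR)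
  have hconjc : (starRingEnd ℂ) c = -Complex.I * R * (starRingEnd ℂ) v' := by
    simp [hc, map_mul, Complex.conj_I, Complex.conj_ofReal]
  rw [hconjc, hc, Complex.inv_I]
  match_scalars <;> field_simp <;> ring

theorem double_layer_factorization {H : Type*} [NormedAddCommGroup H]
    [InnerProductSpace ℂ H] [CompleteSpace H]
    (T : H →L[ℂ] H) (v v' C : ℂ) (R : ℝ) (hR : 0 < R)
    (hfact : v - C = Complex.I * R * v') (hv' : ‖v'‖ = 1)
    (hv : v ∉ spectrum ℂ T) (hC : C ∉ spectrum ℂ T) :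
    (Complex.I)⁻¹ •
        (v' • Ring.inverse (v • (1 : H →L[ℂ] H) - T) -
          (starRingEnd ℂ v') •
            Ring.inverse ((starRingEnd ℂ v) • (1 : H →L[ℂ] H) - adjoint T)) +
      ((R : ℂ))⁻¹ • (1 : H →L[ℂ] H) =
    (R : ℂ) •
      (Ring.inverse (v • (1 : H →L[ℂ] H) - T) * (T - C • 1) *
        (((R : ℂ) ^ 2)⁻¹ • (1 : H →L[ℂ] H) -
          Ring.inverse (T - C • 1) * Ring.inverse (adjoint (T - C • 1))) *
        adjoint (T - C • 1) * Ring.inverse (adjoint (v • (1 : H →L[ℂ] H) - T))) := by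
  have ha : IsUnit (v • (1 : H →L[ℂ] H) - T) := by
    have := spectrum.notMem_iff.mp hv
    rwa [Algebra.algebraMap_eq_smul_one] at this
  have hb : IsUnit (T - C • (1 : H →L[ℂ] H)) := by
    have := spectrum.notMem_iff.mp hC
    rw [Algebra.algebraMap_eq_smul_one] at this
    rw [← neg_sub]
    exact this.neg
  have e1 : (starRingEnd ℂ v) • (1 : H →L[ℂ] H) - adjoint T
      = star (v • (1 : H →L[ℂ] H) - T) := by
    simp [star_sub, star_smul, ContinuousLinearMap.star_eq_adjoint, Complex.star_def]
  have e2 : adjoint (T - C • (1 : H →L[ℂ] H)) = star (T - C • (1 : H →L[ℂ] H)) :=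
    (ContinuousLinearMap.star_eq_adjoint _).symm
  rw [e1, e2]
  refine dl_aux _ _ ha hb v' R hR hv' ?_
  rw [← hfact]
  module
end

section
/- Let r : [−δ₋, δ₊] → [1, ∞) be continuous with r(0) = 1, strictly increasing on [0, δ₊], strictly decreasing on [−δ₋, 0], and such that ∫_{−δ₋}^{δ₊} 1/(r(θ)−1) dθ < ∞ (with r(θ) > 1 for θ ≠ 0). Then limsup_{θ → 0⁺} θ/(r(θ)−1) = 0 and limsup_{θ → 0⁻} |θ|/(r(θ)−1) = 0. -/
/-! On `(0, δ₊]` the function `f = 1 / (r - 1)` is antitone, so on `[θ/2, θ]` it is at least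
`f θ`, whence `θ f(θ) ≤ 2 ∫_{θ/2}^{θ} f = 2 (F θ - F (θ/2))` for the primitive `F` of the
integrable `f`; both terms tend to `F 0 = 0` as `θ → 0⁺`. The side `θ → 0⁻` follows by
reflection. -/

open Filter MeasureTheory Set Topology

theorem MonotoneOn.antitoneOn_one_div_sub_one {r : ℝ → ℝ} {s : Set ℝ} (hr : MonotoneOn r s)
    (h1 : ∀ x ∈ s, 1 < r x) : AntitoneOn (fun x => 1 / (r x - 1)) s :=
  fun x hx _ hy hxy =>
    one_div_le_one_div_of_le (sub_pos.2 (h1 x hx)) (sub_le_sub_right (hr hx hy hxy) 1)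

theorem AntitoneOn.monotoneOn_one_div_sub_one {r : ℝ → ℝ} {s : Set ℝ} (hr : AntitoneOn r s)
    (h1 : ∀ x ∈ s, 1 < r x) : MonotoneOn (fun x => 1 / (r x - 1)) s :=
  fun _ hx y hy hxy =>
    one_div_le_one_div_of_le (sub_pos.2 (h1 y hy)) (sub_le_sub_right (hr hx hy hxy) 1)

theorem tendsto_mul_nhdsGT_zero_of_antitoneOn {f : ℝ → ℝ} {δ : ℝ} (hδ : 0 < δ)
    (hf : AntitoneOn f (Ioc 0 δ)) (hint : IntervalIntegrable f volume 0 δ) :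
    Tendsto (fun θ => θ * f θ) (𝓝[>] 0) (𝓝 0) := by
  set F : ℝ → ℝ := fun x => ∫ t in (0 : ℝ)..x, f t
  have hF : Tendsto F (𝓝[>] 0) (𝓝 0) := by
    have hcont : ContinuousWithinAt F (uIcc 0 δ) 0 :=
      intervalIntegral.continuousOn_primitive_interval' hint left_mem_uIcc 0 left_mem_uIcc
    have hF0 : F 0 = 0 := intervalIntegral.integral_same
    rw [uIcc_of_le hδ.le, ContinuousWithinAt, hF0] at hcont
    exact hcont.mono_left <| (nhdsWithin_Ioc_eq_nhdsGT hδ).symm.trans_le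
      (nhdsWithin_mono _ Ioc_subset_Icc_self)
  have hhalf : Tendsto (· / 2) (𝓝[>] (0 : ℝ)) (𝓝[>] 0) :=
    tendsto_nhdsWithin_of_tendsto_nhds_of_eventually_within _
      (((continuous_id.div_const (2 : ℝ)).tendsto' 0 0 (zero_div 2)).mono_left nhdsWithin_le_nhds)
      (eventually_mem_nhdsWithin.mono fun _ hx => half_pos (mem_Ioi.1 hx))
  have hlower : ∀ θ ∈ Ioc 0 δ, θ * f δ ≤ θ * f θ := fun θ hθ =>
    mul_le_mul_of_nonneg_left (hf hθ (right_mem_Ioc.2 hδ) hθ.2) hθ.1.le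
  have hint' : ∀ {a b}, a ∈ Icc 0 δ → b ∈ Icc 0 δ → IntervalIntegrable f volume a b :=
    fun ha hb => hint.mono_set <| uIcc_subset_uIcc (by rwa [uIcc_of_le hδ.le])
      (by rwa [uIcc_of_le hδ.le])
  have hupper : ∀ θ ∈ Ioc 0 δ, θ * f θ ≤ 2 * (F θ - F (θ / 2)) := by
    rintro θ ⟨hθ0, hθδ⟩
    have h0 : (0 : ℝ) ∈ Icc 0 δ := left_mem_Icc.2 hδ.le
    have hθ : θ ∈ Icc 0 δ := ⟨hθ0.le, hθδ⟩
    have hθ2 : θ / 2 ∈ Icc 0 δ := ⟨by positivity, by linarith⟩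
    calc θ * f θ = 2 * ∫ _ in θ / 2..θ, f θ := by
          rw [intervalIntegral.integral_const, smul_eq_mul]; ring
      _ ≤ 2 * ∫ t in θ / 2..θ, f t := by
          gcongr
          refine intervalIntegral.integral_mono_on (by linarith) intervalIntegrable_const
            (hint' hθ2 hθ) fun t ht => ?_
          exact hf ⟨by linarith [ht.1], ht.2.trans hθδ⟩ ⟨hθ0, hθδ⟩ ht.2
      _ = 2 * (F θ - F (θ / 2)) := by
          rw [intervalIntegral.integral_interval_sub_left (hint' h0 hθ) (hint' h0 hθ2)]
  have hmem : Ioc 0 δ ∈ 𝓝[>] (0 : ℝ) := Ioc_mem_nhdsGT hδ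
  refine tendsto_of_tendsto_of_tendsto_of_le_of_le' ?_ ?_
    (eventually_of_mem hmem hlower) (eventually_of_mem hmem hupper)
  · simpa using ((tendsto_id (x := 𝓝 (0 : ℝ))).mono_left nhdsWithin_le_nhds).mul_const (f δ)
  · simpa using ((hF.sub (hF.comp hhalf)).const_mul 2)

theorem tendsto_abs_mul_nhdsLT_zero_of_monotoneOn {f : ℝ → ℝ} {δ : ℝ} (hδ : 0 < δ)
    (hf : MonotoneOn f (Ico (-δ) 0)) (hint : IntervalIntegrable f volume (-δ) 0) :
    Tendsto (fun θ => |θ| * f θ) (𝓝[<] 0) (𝓝 0) := by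
  have hreflect : Tendsto (fun x => x * f (-x)) (𝓝[>] 0) (𝓝 0) := by
    refine tendsto_mul_nhdsGT_zero_of_antitoneOn hδ
      (fun x hx y hy hxy => hf ?_ ?_ (neg_le_neg hxy)) ?_
    · exact ⟨neg_le_neg hy.2, neg_neg_of_pos hy.1⟩
    · exact ⟨neg_le_neg hx.2, neg_neg_of_pos hx.1⟩
    · simpa using ((IntervalIntegrable.iff_comp_neg (by simp)).1 hint).symm
  refine (hreflect.comp (by simpa using tendsto_neg_nhdsLT (a := (0 : ℝ)))).congr' ?_
  filter_upwards [self_mem_nhdsWithin] with θ hθ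
  simp [abs_of_neg (mem_Iio.1 hθ)]

theorem vtype_curve_tendsto_general (δm δp : ℝ) (hδm : 0 < δm)
    (hδp : 0 < δp) (r : ℝ → ℝ)
    (hmono : StrictMonoOn r (Set.Icc 0 δp))
    (hanti : StrictAntiOn r (Set.Icc (-δm) 0))
    (hgt : ∀ θ ∈ Set.Icc (-δm) δp, θ ≠ 0 → 1 < r θ)
    (hint : IntegrableOn (fun θ => 1 / (r θ - 1)) (Set.Icc (-δm) δp)) :
    Tendsto (fun θ => θ / (r θ - 1)) (nhdsWithin 0 (Set.Ioi 0)) (nhds 0) ∧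
      Tendsto (fun θ => |θ| / (r θ - 1)) (nhdsWithin 0 (Set.Iio 0)) (nhds 0) := by
  have hpos : ∀ θ ∈ Ioc 0 δp, 1 < r θ := fun θ hθ =>
    hgt θ ⟨by linarith [hθ.1], hθ.2⟩ hθ.1.ne'
  have hneg : ∀ θ ∈ Ico (-δm) 0, 1 < r θ := fun θ hθ =>
    hgt θ ⟨hθ.1, by linarith [hθ.2]⟩ hθ.2.ne
  have hintp : IntervalIntegrable (fun θ => 1 / (r θ - 1)) volume 0 δp :=
    (intervalIntegrable_iff_integrableOn_Icc_of_le hδp.le).2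
      (hint.mono_set (Icc_subset_Icc (by linarith) le_rfl))
  have hintm : IntervalIntegrable (fun θ => 1 / (r θ - 1)) volume (-δm) 0 :=
    (intervalIntegrable_iff_integrableOn_Icc_of_le (by linarith)).2
      (hint.mono_set (Icc_subset_Icc le_rfl hδp.le))
  exact ⟨(tendsto_mul_nhdsGT_zero_of_antitoneOn hδp
      ((hmono.monotoneOn.mono Ioc_subset_Icc_self).antitoneOn_one_div_sub_one hpos) hintp).congr
      fun θ => mul_one_div θ _,
    (tendsto_abs_mul_nhdsLT_zero_of_monotoneOn hδm
      ((hanti.antitoneOn.mono Ico_subset_Icc_self).monotoneOn_one_div_sub_one hneg) hintm).congr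
      fun θ => mul_one_div |θ| _⟩

theorem vtype_curve_tendsto (δm δp : ℝ) (hδm : 0 < δm) (hδm' : δm < Real.pi)
    (hδp : 0 < δp) (hδp' : δp < Real.pi) (r : ℝ → ℝ)
    (hcont : ContinuousOn r (Set.Icc (-δm) δp))
    (hge : ∀ θ ∈ Set.Icc (-δm) δp, 1 ≤ r θ)
    (hr0 : r 0 = 1)
    (hmono : StrictMonoOn r (Set.Icc 0 δp))
    (hanti : StrictAntiOn r (Set.Icc (-δm) 0))
    (hgt : ∀ θ ∈ Set.Icc (-δm) δp, θ ≠ 0 → 1 < r θ)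
    (hint : IntegrableOn (fun θ => 1 / (r θ - 1)) (Set.Icc (-δm) δp)) :
    Tendsto (fun θ => θ / (r θ - 1)) (nhdsWithin 0 (Set.Ioi 0)) (nhds 0) ∧
      Tendsto (fun θ => |θ| / (r θ - 1)) (nhdsWithin 0 (Set.Iio 0)) (nhds 0) :=
  vtype_curve_tendsto_general δm δp hδm hδp r hmono hanti hgt hint
end

section
/- There exists a numerical constant C > 0 such that for all a with 0 < a < 1, the sum ∑_{n=2}^∞ aⁿ/√(log n) ≤ C · |log(1−a)|^{-1/2}/(1−a). -/
theorem sum_pow_div_sqrt_log_bound :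
    ∃ C : ℝ, 0 < C ∧ ∀ a : ℝ, 0 < a → a < 1 →
      ∑' n : ℕ, a ^ (n + 2) / Real.sqrt (Real.log (n + 2)) ≤
        C * |Real.log (1 - a)| ^ (-(1 : ℝ) / 2) / (1 - a) := by
  refine ⟨4, by norm_num, ?_⟩
  intro a ha ha1
  have h1a : (0:ℝ) < 1 - a := by linarith
  set L : ℝ := -Real.log (1 - a) with hLdef
  have hlogneg : Real.log (1 - a) < 0 := Real.log_neg h1a (by linarith)
  have hL : 0 < L := by simp only [hLdef]; linarith
  have hsL : 0 < Real.sqrt L := Real.sqrt_pos.mpr hL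
  have habs : |Real.log (1 - a)| = L := abs_of_neg hlogneg
  have hrpow : |Real.log (1 - a)| ^ (-(1:ℝ)/2) = 1 / Real.sqrt L := by
    rw [habs, neg_div, Real.rpow_neg hL.le, Real.sqrt_eq_rpow]
    exact (one_div _).symm
  -- key inequality : (1-a) * L ≤ 1
  have hkey : (1 - a) * L ≤ 1 := by
    have h := Real.log_le_sub_one_of_pos (inv_pos.mpr h1a)
    rw [Real.log_inv] at h
    have hLle : L ≤ (1 - a)⁻¹ := by
      have : (0:ℝ) < (1 - a)⁻¹ := inv_pos.mpr h1a
      linarith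
    calc (1 - a) * L ≤ (1 - a) * (1 - a)⁻¹ := by
          exact mul_le_mul_of_nonneg_left hLle h1a.le
      _ = 1 := mul_inv_cancel₀ h1a.ne'
  -- threshold
  set M : ℝ := Real.sqrt (1 - a)⁻¹ with hMdef
  have hinv1 : (1:ℝ) ≤ (1 - a)⁻¹ := by
    nlinarith [inv_pos.mpr h1a, mul_inv_cancel₀ h1a.ne', mul_nonneg (inv_pos.mpr h1a).le ha.le]
  have hM1 : (1:ℝ) ≤ M :=
    calc (1:ℝ) = Real.sqrt 1 := Real.sqrt_one.symm
      _ ≤ M := Real.sqrt_le_sqrt hinv1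
  have hMpos : 0 < M := by linarith
  have hlogM : Real.log M = L / 2 := by
    rw [hMdef, Real.log_sqrt (by positivity), Real.log_inv]
  set K : ℕ := ⌈M⌉₊ with hKdef
  have hMK : M ≤ (K:ℝ) := Nat.le_ceil M
  have hK2M : (K:ℝ) ≤ 2 * M := by
    have := Nat.ceil_lt_add_one (le_of_lt hMpos)
    calc (K:ℝ) ≤ M + 1 := le_of_lt this
      _ ≤ 2 * M := by linarith
  -- the summand
  set f : ℕ → ℝ := fun n => a ^ (n + 2) / Real.sqrt (Real.log ((n:ℝ) + 2)) with hfdef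
  have hlog2 : (0:ℝ) < Real.log 2 := Real.log_pos (by norm_num)
  have hslog2 : 0 < Real.sqrt (Real.log 2) := Real.sqrt_pos.mpr hlog2
  have hlogn : ∀ n : ℕ, Real.sqrt (Real.log 2) ≤ Real.sqrt (Real.log ((n:ℝ) + 2)) := by
    intro n
    apply Real.sqrt_le_sqrt
    apply Real.log_le_log (by norm_num)
    have : (0:ℝ) ≤ (n:ℝ) := Nat.cast_nonneg n
    linarith
  have hlognpos : ∀ n : ℕ, 0 < Real.sqrt (Real.log ((n:ℝ) + 2)) := fun n =>
    lt_of_lt_of_le hslog2 (hlogn n)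
  have hfnonneg : ∀ n, 0 ≤ f n := by
    intro n
    apply div_nonneg (pow_nonneg ha.le _) (Real.sqrt_nonneg _)
  have hfle : ∀ n, f n ≤ a ^ (n + 2) / Real.sqrt (Real.log 2) := by
    intro n
    exact div_le_div_of_nonneg_left (pow_nonneg ha.le _) hslog2 (hlogn n)
  have hgeom : Summable (fun n : ℕ => a ^ n) := summable_geometric_of_lt_one ha.le ha1
  have hsum : Summable f := by
    apply Summable.of_nonneg_of_le hfnonneg hfle
    have : (fun n : ℕ => a ^ (n + 2) / Real.sqrt (Real.log 2)) =
        fun n : ℕ => (a ^ 2 / Real.sqrt (Real.log 2)) * a ^ n := by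
      funext n; ring
    rw [this]
    exact hgeom.mul_left _
  -- split the sum
  have hsplit : ∑' n, f n = (∑ i ∈ Finset.range K, f i) + ∑' n, f (n + K) :=
    (Summable.sum_add_tsum_nat_add K hsum).symm
  -- head bound
  have hhead : (∑ i ∈ Finset.range K, f i) ≤ (K:ℝ) * (1 / Real.sqrt (Real.log 2)) := by
    have : ∀ i ∈ Finset.range K, f i ≤ 1 / Real.sqrt (Real.log 2) := by
      intro i _
      calc f i ≤ a ^ (i + 2) / Real.sqrt (Real.log 2) := hfle i
        _ ≤ 1 / Real.sqrt (Real.log 2) := by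
            apply div_le_div_of_nonneg_right ?_ hslog2.le
            exact pow_le_one₀ ha.le ha1.le
    calc (∑ i ∈ Finset.range K, f i) ≤ Finset.card (Finset.range K) •
          (1 / Real.sqrt (Real.log 2)) := Finset.sum_le_card_nsmul _ _ _ this
      _ = (K:ℝ) * (1 / Real.sqrt (Real.log 2)) := by
          rw [Finset.card_range, nsmul_eq_mul]
  -- tail bound
  have htailpt : ∀ n : ℕ, f (n + K) ≤ a ^ n * (Real.sqrt 2 / Real.sqrt L) := by
    intro n
    have hle : Real.sqrt L / Real.sqrt 2 ≤ Real.sqrt (Real.log ((↑(n + K):ℝ) + 2)) := by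
      rw [← Real.sqrt_div' L (by norm_num), show L / 2 = Real.log M from hlogM.symm] at *
      apply Real.sqrt_le_sqrt
      apply Real.log_le_log hMpos
      calc M ≤ (K:ℝ) := hMK
        _ ≤ (↑(n + K):ℝ) + 2 := by push_cast; linarith [Nat.cast_nonneg (α := ℝ) n]
    have hd2 : 0 < Real.sqrt L / Real.sqrt 2 := by positivity
    calc f (n + K) ≤ a ^ (n + K + 2) / (Real.sqrt L / Real.sqrt 2) :=
          div_le_div_of_nonneg_left (pow_nonneg ha.le _) hd2 hle
      _ = a ^ (n + K + 2) * (Real.sqrt 2 / Real.sqrt L) := by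
          field_simp
      _ ≤ a ^ n * (Real.sqrt 2 / Real.sqrt L) := by
          apply mul_le_mul_of_nonneg_right ?_ (by positivity)
          exact pow_le_pow_of_le_one ha.le ha1.le (by omega)
  have htail : ∑' n, f (n + K) ≤ (1 - a)⁻¹ * (Real.sqrt 2 / Real.sqrt L) := by
    have hsum2 : Summable (fun n : ℕ => a ^ n * (Real.sqrt 2 / Real.sqrt L)) :=
      hgeom.mul_right _
    calc ∑' n, f (n + K) ≤ ∑' n : ℕ, a ^ n * (Real.sqrt 2 / Real.sqrt L) :=
          Summable.tsum_le_tsum htailpt ((summable_nat_add_iff K).mpr hsum) hsum2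
      _ = (1 - a)⁻¹ * (Real.sqrt 2 / Real.sqrt L) := by
          rw [tsum_mul_right, tsum_geometric_of_lt_one ha.le ha1]
  -- numeric facts
  have hlog2lb : Real.sqrt (Real.log 2) ≥ 0.8 := by
    have h9 : (0.6931471803 : ℝ) < Real.log 2 := Real.log_two_gt_d9
    nlinarith [Real.sq_sqrt hlog2.le, Real.sqrt_nonneg (Real.log 2)]
  have hsqrt2 : Real.sqrt 2 ≤ 1.5 := by
    nlinarith [Real.sq_sqrt (show (0:ℝ) ≤ 2 by norm_num), Real.sqrt_nonneg 2]
  -- combine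
  have hst : Real.sqrt (1 - a) * Real.sqrt L ≤ 1 := by
    rw [← Real.sqrt_mul h1a.le]
    calc Real.sqrt ((1 - a) * L) ≤ Real.sqrt 1 := Real.sqrt_le_sqrt hkey
      _ = 1 := Real.sqrt_one
  have hs : 0 < Real.sqrt (1 - a) := Real.sqrt_pos.mpr h1a
  have hMs : M * Real.sqrt (1 - a) = 1 := by
    rw [hMdef, ← Real.sqrt_mul (by positivity), inv_mul_cancel₀ h1a.ne', Real.sqrt_one]
  have hs2 : Real.sqrt (1 - a) * Real.sqrt (1 - a) = 1 - a := Real.mul_self_sqrt h1a.le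
  -- head ≤ 2.5 * (1/√L)/(1-a)
  have hheadfin : (K:ℝ) * (1 / Real.sqrt (Real.log 2)) ≤
      2.5 * (1 / Real.sqrt L) / (1 - a) := by
    have h1 : (K:ℝ) * (1 / Real.sqrt (Real.log 2)) ≤ 2 * M * (1 / 0.8) := by
      apply mul_le_mul hK2M ?_ (by positivity) (by linarith [hMpos])
      apply div_le_div_of_nonneg_left (by norm_num) (by norm_num) hlog2lb
    have hMle : M * ((1 - a) * Real.sqrt L) ≤ 1 := by
      have heq : (M * Real.sqrt (1 - a)) * (Real.sqrt (1 - a) * Real.sqrt L)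
          = M * ((1 - a) * Real.sqrt L) := by
        rw [show (M * Real.sqrt (1 - a)) * (Real.sqrt (1 - a) * Real.sqrt L)
            = M * ((Real.sqrt (1 - a) * Real.sqrt (1 - a)) * Real.sqrt L) from by ring, hs2]
      rw [← heq, hMs, one_mul]; exact hst
    have h2 : 2 * M * (1 / 0.8) ≤ 2.5 * (1 / Real.sqrt L) / (1 - a) := by
      have he : 2 * M * ((1:ℝ) / 0.8) = 2.5 * M := by ring
      rw [he, le_div_iff₀ h1a, mul_one_div, le_div_iff₀ hsL]
      nlinarith [hMle]
    linarith
  -- tail ≤ 1.5 * (1/√L)/(1-a)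
  have htailfin : (1 - a)⁻¹ * (Real.sqrt 2 / Real.sqrt L) ≤
      1.5 * (1 / Real.sqrt L) / (1 - a) := by
    have hstep : Real.sqrt 2 / Real.sqrt L ≤ 1.5 * (1 / Real.sqrt L) := by
      rw [mul_one_div]
      exact div_le_div_of_nonneg_right hsqrt2 hsL.le
    calc (1 - a)⁻¹ * (Real.sqrt 2 / Real.sqrt L)
        ≤ (1 - a)⁻¹ * (1.5 * (1 / Real.sqrt L)) :=
          mul_le_mul_of_nonneg_left hstep (inv_nonneg.mpr h1a.le)
      _ = 1.5 * (1 / Real.sqrt L) / (1 - a) := by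
          rw [div_eq_mul_inv]; ring
  -- finish
  clear_value f K M L
  have : ∑' n, f n ≤ 4 * (1 / Real.sqrt L) / (1 - a) := by
    rw [hsplit]
    calc (∑ i ∈ Finset.range K, f i) + ∑' n, f (n + K)
        ≤ 2.5 * (1 / Real.sqrt L) / (1 - a) + 1.5 * (1 / Real.sqrt L) / (1 - a) :=
          add_le_add (le_trans hhead hheadfin) (le_trans htail htailfin)
      _ = 4 * (1 / Real.sqrt L) / (1 - a) := by ring
  have hgoal : 4 * |Real.log (1 - a)| ^ (-(1:ℝ)/2) / (1 - a)
      = 4 * (1 / Real.sqrt L) / (1 - a) := by rw [hrpow]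
  rw [hgoal]
  exact this
end

section
/- Let 0 < a < 1/4 and let {b_k}_{k≥1} be a square-summable sequence of nonnegative reals. Then sup_{N ≥ 1} (1/N) ∑_{k=1}^{N} √( ∑_{j=1}^∞ ((k+j)/j)^{2a} b_{k+j}² ) ≤ √(2(1−2a)^{-1} + 2) · √( ∑_{k=1}^∞ b_k² ). -/
/-!
Reindexing by `m = k + j`, the `k`-th inner series is `∑_{m ≥ k} ((m+1)/(m+1-k))^s b_{m+1}²`
with `s = 2a`. By Cauchy–Schwarz `(∑_{k ≤ N} √S_k)² ≤ N ∑_{k ≤ N} S_k`, and after exchanging the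
sums it suffices to bound the total weight `∑_{k ≤ min(N, m)} ((m+1)/(m+1-k))^s` of `b_{m+1}²` by
`N (2/(1-s) + 2)`. If `m + 1 ≥ 2N` every term is at most `2`. Otherwise the weight is
`(m+1)^s ∑_{i ≤ m} i^(-s) ≤ (m+1)/(1-s) ≤ 2N/(1-s)`, the partial sum of the `p`-series being
bounded by telescoping `(1-s)(x+1)^(-s) ≤ (x+1)^(1-s) - x^(1-s)`, an instance of weighted AM-GM.
-/

open Finset Real

lemma sum_sqrt_le_sqrt_card_mul_sum {ι : Type*} (t : Finset ι) {f : ι → ℝ} (hf : ∀ i, 0 ≤ f i) :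
    ∑ i ∈ t, √(f i) ≤ √(#t * ∑ i ∈ t, f i) := by
  simpa [mul_comm, sqrt_mul (Nat.cast_nonneg _)] using
    sum_sqrt_mul_sqrt_le t hf (fun _ => zero_le_one)

lemma one_sub_mul_add_one_rpow_neg_le {s x : ℝ} (hs0 : 0 ≤ s) (hs1 : s ≤ 1) (hx : 0 ≤ x) :
    (1 - s) * (x + 1) ^ (-s) ≤ (x + 1) ^ (1 - s) - x ^ (1 - s) := by
  have hx1 : 0 < x + 1 := by linarith
  -- weighted AM-GM: `x ^ (1 - s) * (x + 1) ^ s ≤ x + s`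
  have amgm := geom_mean_le_arith_mean2_weighted (sub_nonneg.2 hs1) hs0 hx hx1.le (by ring)
  have hsplit : x ^ (1 - s) = x ^ (1 - s) * (x + 1) ^ s * (x + 1) ^ (-s) := by
    rw [mul_assoc, ← rpow_add hx1, add_neg_cancel, rpow_zero, mul_one]
  have hsplit' : (x + 1) ^ (1 - s) = (x + 1) * (x + 1) ^ (-s) := by
    rw [sub_eq_add_neg, rpow_add hx1, rpow_one]
  rw [hsplit, hsplit']
  nlinarith [rpow_nonneg hx1.le (-s)]

lemma sum_range_add_one_rpow_neg_le {s : ℝ} (hs0 : 0 ≤ s) (hs1 : s < 1) (M : ℕ) :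
    ∑ i ∈ range M, ((i : ℝ) + 1) ^ (-s) ≤ (M : ℝ) ^ (1 - s) / (1 - s) := by
  rw [le_div_iff₀ (by linarith), sum_mul]
  calc ∑ i ∈ range M, ((i : ℝ) + 1) ^ (-s) * (1 - s)
      ≤ ∑ i ∈ range M, (((i + 1 : ℕ) : ℝ) ^ (1 - s) - (i : ℝ) ^ (1 - s)) :=
        sum_le_sum fun i _ => by
          push_cast
          linarith [one_sub_mul_add_one_rpow_neg_le hs0 hs1.le (Nat.cast_nonneg (α := ℝ) i)]
    _ = (M : ℝ) ^ (1 - s) := by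
        rw [sum_range_sub (fun i : ℕ => (i : ℝ) ^ (1 - s))]
        simp [zero_rpow (by linarith : 1 - s ≠ 0)]

-- The coefficient of `c m` in `∑' j, ((k + (j + 1)) / (j + 1)) ^ s * c (k + j)` after reindexing
-- `m = k + j` (see `tsum_shift_eq_tsum_shiftWeight_mul`).
noncomputable def shiftWeight (s : ℝ) (k m : ℕ) : ℝ :=
  if k ≤ m then (((m : ℝ) + 1) / ((m : ℝ) + 1 - k)) ^ s else 0

section shiftWeight

variable {s : ℝ}

lemma shiftWeight_nonneg (s : ℝ) (k m : ℕ) : 0 ≤ shiftWeight s k m := by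
  unfold shiftWeight
  split_ifs with hkm
  · have : (k : ℝ) ≤ m := by exact_mod_cast hkm
    exact rpow_nonneg (div_nonneg (by positivity) (by linarith)) s
  · exact le_rfl

lemma shiftWeight_add_left (s : ℝ) (k j : ℕ) :
    shiftWeight s k (k + j) = (((k : ℝ) + (j + 1)) / (j + 1)) ^ s := by
  rw [shiftWeight, if_pos (Nat.le_add_right k j)]
  push_cast
  ring_nf

lemma shiftWeight_le_add_one_rpow (hs : 0 ≤ s) (k m : ℕ) :
    shiftWeight s k m ≤ ((k : ℝ) + 1) ^ s := by
  unfold shiftWeight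
  split_ifs with hkm
  · have hkm' : (k : ℝ) ≤ m := by exact_mod_cast hkm
    have hd : (0 : ℝ) < m + 1 - k := by linarith
    refine rpow_le_rpow (div_nonneg (by positivity) hd.le) ?_ hs
    rw [div_le_iff₀ hd]
    nlinarith [Nat.cast_nonneg (α := ℝ) k]
  · positivity

lemma shiftWeight_le_two (hs0 : 0 ≤ s) (hs1 : s ≤ 1) {k m : ℕ} (h : 2 * k ≤ m + 1) :
    shiftWeight s k m ≤ 2 := by
  unfold shiftWeight
  split_ifs with hkm
  · have h' : 2 * (k : ℝ) ≤ m + 1 := by exact_mod_cast h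
    have hd : (0 : ℝ) < m + 1 - k := by linarith
    have hle : ((m : ℝ) + 1) / (m + 1 - k) ≤ 2 := by rw [div_le_iff₀ hd]; linarith
    have hge : 1 ≤ ((m : ℝ) + 1) / (m + 1 - k) := by
      rw [le_div_iff₀ hd]; linarith [Nat.cast_nonneg (α := ℝ) k]
    calc (((m : ℝ) + 1) / (m + 1 - k)) ^ s ≤ (2 : ℝ) ^ s := rpow_le_rpow (by linarith) hle hs0
      _ ≤ (2 : ℝ) ^ (1 : ℝ) := rpow_le_rpow_of_exponent_le one_le_two hs1
      _ = 2 := rpow_one 2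
  · norm_num

lemma sum_Icc_shiftWeight_eq (s : ℝ) (m : ℕ) :
    ∑ k ∈ Icc 1 m, shiftWeight s k m = ((m : ℝ) + 1) ^ s * ∑ i ∈ range m, ((i : ℝ) + 1) ^ (-s) := by
  rw [mul_sum]
  refine sum_nbij' (fun k => m - k) (fun i => m - i) (by simp; omega) (by simp; omega)
    (by simp; omega) (by simp; omega) fun k hk => ?_
  rw [mem_Icc] at hk
  have hd : ((m - k : ℕ) : ℝ) + 1 = m + 1 - k := by rw [Nat.cast_sub hk.2]; ring
  rw [shiftWeight, if_pos hk.2, hd, div_rpow (by positivity) (by rw [← hd]; positivity),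
    rpow_neg (by rw [← hd]; positivity), div_eq_mul_inv]

lemma sum_shiftWeight_le_div (hs0 : 0 ≤ s) (hs1 : s < 1) (N m : ℕ) :
    ∑ k ∈ Icc 1 N, shiftWeight s k m ≤ ((m : ℝ) + 1) / (1 - s) := by
  have h1s : 0 < 1 - s := by linarith
  calc ∑ k ∈ Icc 1 N, shiftWeight s k m = ∑ k ∈ Icc 1 N with k ≤ m, shiftWeight s k m := by
        refine (sum_filter_of_ne fun k _ hk => ?_).symm
        by_contra hkm
        exact hk (if_neg hkm)
    _ ≤ ∑ k ∈ Icc 1 m, shiftWeight s k m :=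
        sum_le_sum_of_subset_of_nonneg (fun k hk => by simp at hk ⊢; omega)
          fun k _ _ => shiftWeight_nonneg s k m
    _ = ((m : ℝ) + 1) ^ s * ∑ i ∈ range m, ((i : ℝ) + 1) ^ (-s) := sum_Icc_shiftWeight_eq s m
    _ ≤ ((m : ℝ) + 1) ^ s * (((m : ℝ) + 1) ^ (1 - s) / (1 - s)) := by
        gcongr
        refine (sum_range_add_one_rpow_neg_le hs0 hs1 m).trans ?_
        gcongr
        linarith
    _ = ((m : ℝ) + 1) / (1 - s) := by
        rw [← mul_div_assoc, ← rpow_add (by positivity), add_sub_cancel, rpow_one]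

lemma sum_shiftWeight_le (hs0 : 0 ≤ s) (hs1 : s < 1) (N m : ℕ) :
    ∑ k ∈ Icc 1 N, shiftWeight s k m ≤ N * (2 / (1 - s) + 2) := by
  have h1s : 0 < 1 - s := by linarith
  rcases le_or_gt (2 * N) (m + 1) with hlarge | hsmall
  · calc ∑ k ∈ Icc 1 N, shiftWeight s k m ≤ ∑ _k ∈ Icc 1 N, (2 : ℝ) :=
          sum_le_sum fun k hk => shiftWeight_le_two hs0 hs1.le (by simp at hk; omega)
      _ = N * 2 := by simp
      _ ≤ N * (2 / (1 - s) + 2) := by gcongr; linarith [div_pos two_pos h1s]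
  · have hm : (m : ℝ) + 1 ≤ 2 * N := by exact_mod_cast hsmall.le
    calc ∑ k ∈ Icc 1 N, shiftWeight s k m ≤ ((m : ℝ) + 1) / (1 - s) :=
          sum_shiftWeight_le_div hs0 hs1 N m
      _ ≤ 2 * N / (1 - s) := by gcongr
      _ ≤ N * (2 / (1 - s) + 2) := by
          rw [mul_add, mul_div_assoc', mul_comm (N : ℝ) 2]; linarith [N.cast_nonneg (α := ℝ)]

lemma tsum_shift_eq_tsum_shiftWeight_mul (s : ℝ) (c : ℕ → ℝ) (k : ℕ) :
    ∑' j : ℕ, (((k : ℝ) + (j + 1)) / (j + 1)) ^ s * c (k + j) =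
      ∑' m : ℕ, shiftWeight s k m * c m := by
  refine (tsum_congr fun j => by rw [shiftWeight_add_left]).trans
    ((add_right_injective k).tsum_eq fun m hm => ?_)
  have hkm : k ≤ m := by
    by_contra h
    exact hm (by simp [shiftWeight, h])
  exact ⟨m - k, by simp [hkm]⟩

lemma summable_shiftWeight_mul (hs : 0 ≤ s) {c : ℕ → ℝ} (hc0 : ∀ m, 0 ≤ c m)
    (hc : Summable c) (k : ℕ) : Summable fun m => shiftWeight s k m * c m :=
  (hc.mul_left (((k : ℝ) + 1) ^ s)).of_nonneg_of_le
    (fun m => mul_nonneg (shiftWeight_nonneg s k m) (hc0 m))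
    fun m => mul_le_mul_of_nonneg_right (shiftWeight_le_add_one_rpow hs k m) (hc0 m)

lemma sum_tsum_shiftWeight_mul_le (hs0 : 0 ≤ s) (hs1 : s < 1) {c : ℕ → ℝ}
    (hc0 : ∀ m, 0 ≤ c m) (hc : Summable c) (N : ℕ) :
    ∑ k ∈ Icc 1 N, ∑' m, shiftWeight s k m * c m ≤ N * (2 / (1 - s) + 2) * ∑' m, c m := by
  have hsum k (_ : k ∈ Icc 1 N) := summable_shiftWeight_mul hs0 hc0 hc k
  calc ∑ k ∈ Icc 1 N, ∑' m, shiftWeight s k m * c m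
      = ∑' m, (∑ k ∈ Icc 1 N, shiftWeight s k m) * c m := by
        rw [← Summable.tsum_finsetSum hsum]
        simp only [sum_mul]
    _ ≤ ∑' m, N * (2 / (1 - s) + 2) * c m :=
        (summable_sum hsum).congr (fun m => by simp only [sum_mul]) |>.tsum_le_tsum
          (fun m => mul_le_mul_of_nonneg_right (sum_shiftWeight_le hs0 hs1 N m) (hc0 m))
          (hc.mul_left _)
    _ = N * (2 / (1 - s) + 2) * ∑' m, c m := tsum_mul_left

end shiftWeight

theorem absolute_cesaro_shift_inequality_general (a : ℝ) (ha0 : 0 < a) (ha : a < 1 / 4)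
    (b : ℕ → ℝ) (hsum : Summable fun k : ℕ => (b (k + 1)) ^ 2) :
    ∀ N : ℕ, 1 ≤ N →
      (1 / (N : ℝ)) * ∑ k ∈ Finset.Icc 1 N,
          Real.sqrt (∑' j : ℕ,
            (((k : ℝ) + (j + 1)) / (j + 1)) ^ (2 * a) * (b (k + j + 1)) ^ 2) ≤
        Real.sqrt (2 / (1 - 2 * a) + 2) * Real.sqrt (∑' k : ℕ, (b (k + 1)) ^ 2) := by
  intro N hN
  have hN' : (0 : ℝ) < N := by exact_mod_cast hN
  have hs0 : 0 ≤ 2 * a := by linarith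
  have hs1 : 2 * a < 1 := by linarith
  set C := 2 / (1 - 2 * a) + 2
  have hC : 0 ≤ C := by positivity
  set c : ℕ → ℝ := fun m => b (m + 1) ^ 2
  have hc0 m : 0 ≤ c m := sq_nonneg _
  have hS (k : ℕ) : ∑' j : ℕ, (((k : ℝ) + (j + 1)) / (j + 1)) ^ (2 * a) * b (k + j + 1) ^ 2 =
      ∑' m, shiftWeight (2 * a) k m * c m :=
    tsum_shift_eq_tsum_shiftWeight_mul _ c k
  have hS0 (k : ℕ) : 0 ≤ ∑' m, shiftWeight (2 * a) k m * c m :=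
    tsum_nonneg fun m => mul_nonneg (shiftWeight_nonneg _ k m) (hc0 m)
  simp_rw [hS]
  calc 1 / (N : ℝ) * ∑ k ∈ Icc 1 N, √(∑' m, shiftWeight (2 * a) k m * c m)
      ≤ 1 / N * √(N * (N * C * ∑' m, c m)) := by
        gcongr
        refine (sum_sqrt_le_sqrt_card_mul_sum _ hS0).trans ?_
        rw [Nat.card_Icc, Nat.add_sub_cancel]
        gcongr
        exact sum_tsum_shiftWeight_mul_le hs0 hs1 hc0 hsum N
    _ = √C * √(∑' m, c m) := by
        rw [show (N : ℝ) * (N * C * ∑' m, c m) = N ^ 2 * (C * ∑' m, c m) by ring,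
          sqrt_mul (sq_nonneg _), sqrt_sq hN'.le, sqrt_mul hC]
        field_simp

theorem absolute_cesaro_shift_inequality (a : ℝ) (ha0 : 0 < a) (ha : a < 1 / 4)
    (b : ℕ → ℝ) (hb : ∀ k, 0 ≤ b k) (hsum : Summable fun k : ℕ => (b (k + 1)) ^ 2) :
    ∀ N : ℕ, 1 ≤ N →
      (1 / (N : ℝ)) * ∑ k ∈ Finset.Icc 1 N,
          Real.sqrt (∑' j : ℕ,
            (((k : ℝ) + (j + 1)) / (j + 1)) ^ (2 * a) * (b (k + j + 1)) ^ 2) ≤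
        Real.sqrt (2 / (1 - 2 * a) + 2) * Real.sqrt (∑' k : ℕ, (b (k + 1)) ^ 2) :=
  absolute_cesaro_shift_inequality_general a ha0 ha b hsum
end
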